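/- Let (S_n)_{n≥0} be a square integrable martingale with S_0 = 0 adapted to (F_n), and suppose that for each n and every a > 0, E[T_a(S_n - S_{n-1}) | F_{n-1}] ≤ 0 almost surely, where T_a(x) = min(|x|, a)·sign(x). Then for all x > 0 and y > 0, P(S_n ≥ x and Σ_{i=1}^n (S_i - S_{i-1})² ≤ y) ≤ exp(-x²/(2y)). -/

import Mathlib

open MeasureTheory Finset

/-!
For every real `t` and `x`,
`exp (t x - t² x² / 2) ≤ 1 + sign x · (1 - exp (-t |x| - t² x² / 2))`:
this is an equality for `x ≤ 0` and amounts to `cosh (t x) ≤ exp (t² x² / 2)` for `x > 0`.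
For `t > 0` the function `φ b = 1 - exp (-t b - t² b² / 2)` is concave on `[0, ∞)` with
`φ 0 = 0` and `φ' → 0`, so `φ b = ∫₀^∞ (-φ'' a) min b a da`; hence the odd correction term is
a mixture `∫₀^∞ (-φ'' a) T_a x da` of truncations with a nonnegative weight. Heavy-on-left
increments therefore make `exp (t S_n - t²/2 · Σ (S_{i+1} - S_i)²)` a supermartingale of mean
at most `1`, and Markov's inequality at `t = x / y` gives the bound.
-/

section ConcaveKernel

open Set Filter Topology

variable {φ φ' K : ℝ → ℝ}

theorem integrableOn_Ioi_of_hasDerivAt_neg (hφ' : ∀ x, HasDerivAt φ' (-K x) x)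
    (hK : ∀ x, 0 ≤ x → 0 ≤ K x) (hlim : Tendsto φ' atTop (𝓝 0)) {b : ℝ} (hb : 0 ≤ b) :
    IntegrableOn K (Ioi b) :=
  integrableOn_Ioi_deriv_of_nonneg' (g := -φ') (l := 0) (fun x _ => by simpa using (hφ' x).neg)
    (fun x hx => hK x (hb.trans hx.le)) (by rw [← neg_zero]; exact hlim.neg)

theorem integral_Ioi_of_hasDerivAt_neg (hφ' : ∀ x, HasDerivAt φ' (-K x) x)
    (hK : ∀ x, 0 ≤ x → 0 ≤ K x) (hlim : Tendsto φ' atTop (𝓝 0)) {b : ℝ} (hb : 0 ≤ b) :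
    ∫ a in Ioi b, K a = φ' b := by
  simpa using integral_Ioi_of_hasDerivAt_of_nonneg' (g := -φ') (l := 0)
    (fun x _ => by simpa using (hφ' x).neg) (fun x hx => hK x (hb.trans hx.le))
    (by rw [← neg_zero]; exact hlim.neg)

theorem integral_mul_min_of_hasDerivAt (hφ : ∀ x, HasDerivAt φ (φ' x) x)
    (hφ' : ∀ x, HasDerivAt φ' (-K x) x) (hKc : Continuous K) (hK : ∀ x, 0 ≤ x → 0 ≤ K x)
    (hlim : Tendsto φ' atTop (𝓝 0)) {b : ℝ} (hb : 0 ≤ b) :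
    ∫ a in Ioi 0, K a * min b a = φ b - φ 0 := by
  have hIoc : ∫ a in Ioc 0 b, K a * min b a = φ b - b * φ' b - φ 0 := by
    rw [setIntegral_congr_fun measurableSet_Ioc fun a ha => by rw [min_eq_right ha.2],
      ← intervalIntegral.integral_of_le hb]
    have hderiv : ∀ x, HasDerivAt (fun a => φ a - a * φ' a) (K x * x) x := fun x =>
      ((hφ x).sub ((hasDerivAt_id' x).mul (hφ' x))).congr_deriv (by ring)
    rw [intervalIntegral.integral_eq_sub_of_hasDerivAt (fun x _ => hderiv x)
      ((hKc.mul continuous_id).intervalIntegrable 0 b)]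
    simp
  have hIoi : ∫ a in Ioi b, K a * min b a = b * φ' b := by
    rw [setIntegral_congr_fun measurableSet_Ioi fun a ha => by rw [min_eq_left (le_of_lt ha)],
      integral_mul_const, integral_Ioi_of_hasDerivAt_neg hφ' hK hlim hb, mul_comm]
  have hintIoc : IntegrableOn (fun a => K a * min b a) (Ioc 0 b) :=
    ((hKc.mul (continuous_const.min continuous_id)).integrableOn_Icc).mono_set Ioc_subset_Icc_self
  have hintIoi : IntegrableOn (fun a => K a * min b a) (Ioi b) :=
    IntegrableOn.congr_fun ((integrableOn_Ioi_of_hasDerivAt_neg hφ' hK hlim hb).mul_const b)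
      (fun a ha => by rw [min_eq_left (le_of_lt ha)]) measurableSet_Ioi
  rw [← Ioc_union_Ioi_eq_Ioi hb, setIntegral_union (Ioc_disjoint_Ioi le_rfl) measurableSet_Ioi
    hintIoc hintIoi, hIoc, hIoi]
  ring

theorem integrableOn_mul_of_hasDerivAt (hφ : ∀ x, HasDerivAt φ (φ' x) x)
    (hφ' : ∀ x, HasDerivAt φ' (-K x) x) (hK : ∀ x, 0 ≤ x → 0 ≤ K x) {L : ℝ}
    (hφlim : Tendsto φ atTop (𝓝 L)) (hlim : Tendsto (fun a => a * φ' a) atTop (𝓝 0)) :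
    IntegrableOn (fun a => a * K a) (Ioi 0) :=
  integrableOn_Ioi_deriv_of_nonneg' (g := fun a => φ a - a * φ' a)
    (fun x _ => ((hφ x).sub ((hasDerivAt_id' x).mul (hφ' x))).congr_deriv (by ring))
    (fun x hx => mul_nonneg hx.le (hK x hx.le)) (by simpa using hφlim.sub hlim)

end ConcaveKernel

section ExpNegQuad

open Set Filter Topology

noncomputable def expNegQuad (t b : ℝ) : ℝ := Real.exp (-(t * b) - t ^ 2 * b ^ 2 / 2)

theorem expNegQuad_pos (t b : ℝ) : 0 < expNegQuad t b := Real.exp_pos _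

theorem expNegQuad_le_one {t b : ℝ} (ht : 0 ≤ t) (hb : 0 ≤ b) : expNegQuad t b ≤ 1 :=
  Real.exp_le_one_iff.2 (by nlinarith [mul_nonneg ht hb, sq_nonneg (t * b)])

-- `-φ''` for the function `φ b = 1 - expNegQuad t b` of the header.
noncomputable def truncationWeight (t a : ℝ) : ℝ :=
  ((t + t ^ 2 * a) ^ 2 - t ^ 2) * expNegQuad t a

theorem hasDerivAt_expNegQuad (t b : ℝ) :
    HasDerivAt (expNegQuad t) (-((t + t ^ 2 * b) * expNegQuad t b)) b :=
  (((hasDerivAt_id' b).const_mul t).neg.sub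
    (((hasDerivAt_pow 2 b).const_mul (t ^ 2)).div_const 2)).exp.congr_deriv
    (by simp only [expNegQuad, Pi.sub_apply, Pi.neg_apply]; push_cast; ring)

theorem hasDerivAt_one_sub_expNegQuad (t b : ℝ) :
    HasDerivAt (fun b => 1 - expNegQuad t b) ((t + t ^ 2 * b) * expNegQuad t b) b := by
  simpa using (hasDerivAt_expNegQuad t b).const_sub 1

theorem hasDerivAt_mul_expNegQuad (t b : ℝ) :
    HasDerivAt (fun b => (t + t ^ 2 * b) * expNegQuad t b) (-truncationWeight t b) b := by
  have h : HasDerivAt (fun b => t + t ^ 2 * b) (t ^ 2) b := by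
    simpa using ((hasDerivAt_id b).const_mul (t ^ 2)).const_add t
  exact (h.mul (hasDerivAt_expNegQuad t b)).congr_deriv (by unfold truncationWeight; ring)

theorem continuous_truncationWeight (t : ℝ) : Continuous (truncationWeight t) := by
  unfold truncationWeight expNegQuad; fun_prop

theorem truncationWeight_nonneg {t a : ℝ} (ht : 0 ≤ t) (ha : 0 ≤ a) :
    0 ≤ truncationWeight t a :=
  mul_nonneg
    (by nlinarith [mul_nonneg (pow_nonneg ht 3) ha, mul_nonneg (pow_nonneg ht 4) (sq_nonneg a)])
    (expNegQuad_pos t a).le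

theorem tendsto_pow_mul_expNegQuad {t : ℝ} (ht : 0 < t) (n : ℕ) :
    Tendsto (fun b => b ^ n * expNegQuad t b) atTop (𝓝 0) := by
  refine squeeze_zero' ?_ ?_ (by simpa using tendsto_rpow_mul_exp_neg_mul_atTop_nhds_zero n t ht)
  · filter_upwards [eventually_ge_atTop 0] with b hb
    exact mul_nonneg (pow_nonneg hb n) (Real.exp_pos _).le
  · filter_upwards [eventually_ge_atTop 0] with b hb
    exact mul_le_mul_of_nonneg_left (Real.exp_le_exp.2 (by nlinarith [sq_nonneg (t * b)]))
      (pow_nonneg hb n)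

theorem tendsto_pow_mul_mul_expNegQuad {t : ℝ} (ht : 0 < t) (n : ℕ) :
    Tendsto (fun b => b ^ n * ((t + t ^ 2 * b) * expNegQuad t b)) atTop (𝓝 0) := by
  simpa using (((tendsto_pow_mul_expNegQuad ht n).const_mul t).add
    ((tendsto_pow_mul_expNegQuad ht (n + 1)).const_mul (t ^ 2))).congr fun b => by ring

theorem integral_truncationWeight_mul_min {t b : ℝ} (ht : 0 < t) (hb : 0 ≤ b) :
    ∫ a in Ioi 0, truncationWeight t a * min b a = 1 - expNegQuad t b := by
  rw [integral_mul_min_of_hasDerivAt (hasDerivAt_one_sub_expNegQuad t)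
    (hasDerivAt_mul_expNegQuad t) (continuous_truncationWeight t)
    (fun a ha => truncationWeight_nonneg ht.le ha)
    (by simpa using tendsto_pow_mul_mul_expNegQuad ht 0) hb]
  simp [expNegQuad]

theorem integrableOn_mul_truncationWeight {t : ℝ} (ht : 0 < t) :
    IntegrableOn (fun a => a * truncationWeight t a) (Ioi 0) :=
  integrableOn_mul_of_hasDerivAt (hasDerivAt_one_sub_expNegQuad t) (hasDerivAt_mul_expNegQuad t)
    (fun a ha => truncationWeight_nonneg ht.le ha)
    (by simpa using (tendsto_pow_mul_expNegQuad ht 0).const_sub 1)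
    (by simpa using tendsto_pow_mul_mul_expNegQuad ht 1)

end ExpNegQuad

noncomputable def truncation (a x : ℝ) : ℝ := min |x| a * Real.sign x

section Truncation

open Set

@[fun_prop]
theorem Real.measurable_sign : Measurable Real.sign :=
  Measurable.ite measurableSet_Iio measurable_const
    (Measurable.ite measurableSet_Ioi measurable_const measurable_const)

theorem Real.abs_sign_le_one (x : ℝ) : |Real.sign x| ≤ 1 := by
  rcases Real.sign_apply_eq x with h | h | h <;> simp [h]

@[fun_prop]
theorem Measurable.truncation {α : Type*} [MeasurableSpace α] {f g : α → ℝ} (hf : Measurable f)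
    (hg : Measurable g) : Measurable fun x => truncation (f x) (g x) := by
  unfold _root_.truncation; fun_prop

theorem abs_truncation_le {a : ℝ} (ha : 0 ≤ a) (x : ℝ) : |truncation a x| ≤ a := by
  rw [truncation, abs_mul, abs_of_nonneg (le_min (abs_nonneg x) ha)]
  simpa using mul_le_mul (min_le_right |x| a) (Real.abs_sign_le_one x) (abs_nonneg _) ha

theorem integral_truncationWeight_mul_truncation {t : ℝ} (ht : 0 < t) (x : ℝ) :
    ∫ a in Ioi 0, truncationWeight t a * truncation a x =
      Real.sign x * (1 - expNegQuad t |x|) := by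
  simp_rw [truncation, ← mul_assoc]
  rw [integral_mul_const, integral_truncationWeight_mul_min ht (abs_nonneg x), mul_comm]

theorem exp_le_one_add_sign_mul (t x : ℝ) :
    Real.exp (t * x - t ^ 2 * x ^ 2 / 2) ≤ 1 + Real.sign x * (1 - expNegQuad t |x|) := by
  rcases lt_trichotomy x 0 with hx | rfl | hx
  · rw [Real.sign_of_neg hx, abs_of_neg hx, expNegQuad]
    apply le_of_eq; ring_nf
  · simp
  · rw [Real.sign_of_pos hx, abs_of_pos hx, expNegQuad]
    have hcosh := Real.cosh_le_exp_half_sq (t * x)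
    rw [Real.cosh_eq] at hcosh
    have hsplit : ∀ s, Real.exp (s - t ^ 2 * x ^ 2 / 2)
        = Real.exp s * Real.exp (-((t * x) ^ 2 / 2)) := fun s => by
      rw [← Real.exp_add]; ring_nf
    have hq : Real.exp ((t * x) ^ 2 / 2) * Real.exp (-((t * x) ^ 2 / 2)) = 1 := by
      rw [← Real.exp_add, add_neg_cancel, Real.exp_zero]
    rw [hsplit, hsplit]
    nlinarith [Real.exp_pos (-((t * x) ^ 2 / 2))]

end Truncation

section HeavyOnLeft

open Set

variable {Ω : Type*} {m mΩ : MeasurableSpace Ω} {μ : Measure Ω} [IsFiniteMeasure μ]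
  {W d : Ω → ℝ} {C : ℝ}

theorem integral_mul_truncation_nonpos (hm : m ≤ mΩ) (hW : StronglyMeasurable[m] W)
    (hW0 : ∀ ω, 0 ≤ W ω) (hWC : ∀ ω, W ω ≤ C) (hd : Measurable d) {a : ℝ} (ha : 0 < a)
    (hheavy : ∀ᵐ ω ∂μ, μ[fun ω => truncation a (d ω) | m] ω ≤ 0) :
    ∫ ω, W ω * truncation a (d ω) ∂μ ≤ 0 := by
  have hT : Integrable (fun ω => truncation a (d ω)) μ :=
    .of_bound (measurable_const.truncation hd).aestronglyMeasurable a
      (.of_forall fun ω => abs_truncation_le ha.le _)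
  have hWT : Integrable (fun ω => W ω * truncation a (d ω)) μ :=
    hT.bdd_mul (hW.mono hm).aestronglyMeasurable
      (.of_forall fun ω => by rw [Real.norm_eq_abs, abs_of_nonneg (hW0 ω)]; exact hWC ω)
  calc ∫ ω, W ω * truncation a (d ω) ∂μ
      = ∫ ω, (μ[W * fun ω => truncation a (d ω) | m]) ω ∂μ := (integral_condExp hm).symm
    _ = ∫ ω, W ω * (μ[fun ω => truncation a (d ω) | m]) ω ∂μ :=
      integral_congr_ae (condExp_mul_of_stronglyMeasurable_left hW hWT hT)
    _ ≤ 0 := integral_nonpos_of_ae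
      (hheavy.mono fun ω hω => mul_nonpos_of_nonneg_of_nonpos (hW0 ω) hω)

theorem integral_mul_integral_truncation_nonpos (hm : m ≤ mΩ) (hW : StronglyMeasurable[m] W)
    (hW0 : ∀ ω, 0 ≤ W ω) (hWC : ∀ ω, W ω ≤ C) (hd : Measurable d)
    (hheavy : ∀ a > 0, ∀ᵐ ω ∂μ, μ[fun ω => truncation a (d ω) | m] ω ≤ 0)
    {K : ℝ → ℝ} (hK : Measurable K) (hK0 : ∀ a, 0 < a → 0 ≤ K a)
    (hKint : IntegrableOn (fun a => a * K a) (Ioi 0)) :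
    ∫ ω, W ω * (∫ a in Ioi 0, K a * truncation a (d ω)) ∂μ ≤ 0 := by
  have hWmeas : Measurable W := (hW.mono hm).measurable
  have hG : Integrable (fun p : Ω × ℝ => K p.2 * (W p.1 * truncation p.2 (d p.1)))
      (μ.prod (volume.restrict (Ioi 0))) := by
    refine Integrable.mono' ((integrable_const C).mul_prod hKint) (by fun_prop) ?_
    filter_upwards [Measure.quasiMeasurePreserving_snd.ae (ae_restrict_mem measurableSet_Ioi)]
      with p (hp : 0 < p.2)
    rw [Real.norm_eq_abs, abs_mul, abs_mul, abs_of_nonneg (hK0 _ hp), abs_of_nonneg (hW0 _)]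
    calc K p.2 * (W p.1 * |truncation p.2 (d p.1)|) ≤ K p.2 * (C * p.2) :=
          mul_le_mul_of_nonneg_left (mul_le_mul (hWC _) (abs_truncation_le hp.le _)
            (abs_nonneg _) ((hW0 p.1).trans (hWC p.1))) (hK0 _ hp)
      _ = C * (p.2 * K p.2) := by ring
  calc ∫ ω, W ω * (∫ a in Ioi 0, K a * truncation a (d ω)) ∂μ
      = ∫ ω, (∫ a in Ioi 0, K a * (W ω * truncation a (d ω))) ∂μ := by
        congr with ω
        rw [← integral_const_mul]
        congr with a
        ring
    _ = ∫ a in Ioi 0, K a * ∫ ω, W ω * truncation a (d ω) ∂μ := by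
        rw [integral_integral_swap hG]
        simp_rw [integral_const_mul]
    _ ≤ 0 := setIntegral_nonpos measurableSet_Ioi fun a ha => mul_nonpos_of_nonneg_of_nonpos
        (hK0 a ha) (integral_mul_truncation_nonpos hm hW hW0 hWC hd ha (hheavy a ha))

theorem integral_mul_exp_le_integral (hm : m ≤ mΩ) (hW : StronglyMeasurable[m] W)
    (hW0 : ∀ ω, 0 ≤ W ω) (hWC : ∀ ω, W ω ≤ C) (hd : Measurable d)
    (hheavy : ∀ a > 0, ∀ᵐ ω ∂μ, μ[fun ω => truncation a (d ω) | m] ω ≤ 0) {t : ℝ} (ht : 0 < t) :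
    ∫ ω, W ω * Real.exp (t * d ω - t ^ 2 * d ω ^ 2 / 2) ∂μ ≤ ∫ ω, W ω ∂μ := by
  set V := fun ω => Real.sign (d ω) * (1 - expNegQuad t |d ω|)
  have hV : ∫ ω, W ω * V ω ∂μ ≤ 0 := by
    simpa only [integral_truncationWeight_mul_truncation ht] using
      integral_mul_integral_truncation_nonpos hm hW hW0 hWC hd hheavy
        (continuous_truncationWeight t).measurable
        (fun a ha => truncationWeight_nonneg ht.le ha.le) (integrableOn_mul_truncationWeight ht)
  have hWint : Integrable W μ := .of_bound (hW.mono hm).aestronglyMeasurable C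
    (.of_forall fun ω => by rw [Real.norm_eq_abs, abs_of_nonneg (hW0 ω)]; exact hWC ω)
  have hWVint : Integrable (fun ω => W ω * V ω) μ := by
    refine hWint.mul_bdd (c := 1) (by unfold V expNegQuad; fun_prop) (.of_forall fun ω => ?_)
    have hq := expNegQuad_le_one ht.le (abs_nonneg (d ω))
    have hq' := expNegQuad_pos t |d ω|
    rw [Real.norm_eq_abs, abs_mul]
    exact mul_le_one₀ (Real.abs_sign_le_one _) (abs_nonneg _)
      (abs_le.2 ⟨by linarith, by linarith⟩)
  calc ∫ ω, W ω * Real.exp (t * d ω - t ^ 2 * d ω ^ 2 / 2) ∂μ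
      ≤ ∫ ω, (W ω + W ω * V ω) ∂μ :=
        integral_mono_of_nonneg (.of_forall fun ω => mul_nonneg (hW0 ω) (Real.exp_pos _).le)
          (hWint.add hWVint) (.of_forall fun ω => by
            simpa [mul_add] using
              mul_le_mul_of_nonneg_left (exp_le_one_add_sign_mul t (d ω)) (hW0 ω))
    _ = ∫ ω, W ω ∂μ + ∫ ω, W ω * V ω ∂μ := integral_add hWint hWVint
    _ ≤ ∫ ω, W ω ∂μ := by linarith

end HeavyOnLeft

theorem meas_ge_le_ofReal_integral_div {Ω : Type*} {mΩ : MeasurableSpace Ω} {μ : Measure Ω}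
    [IsFiniteMeasure μ] {f : Ω → ℝ} (hf0 : ∀ ω, 0 ≤ f ω) (hf : Integrable f μ) {c : ℝ}
    (hc : 0 < c) : μ {ω | c ≤ f ω} ≤ ENNReal.ofReal ((∫ ω, f ω ∂μ) / c) := by
  rw [← ofReal_measureReal]
  exact ENNReal.ofReal_le_ofReal ((le_div_iff₀ hc).2 (by
    rw [mul_comm]; exact mul_meas_ge_le_integral_of_nonneg (.of_forall hf0) hf c))

noncomputable def selfNormalizedExp {Ω : Type*} (S : ℕ → Ω → ℝ) (t : ℝ) (n : ℕ) (ω : Ω) : ℝ :=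
  Real.exp (t * S n ω - t ^ 2 / 2 * ∑ i ∈ range n, (S (i + 1) ω - S i ω) ^ 2)

section SelfNormalizedExp

variable {Ω : Type*} {mΩ : MeasurableSpace Ω} {μ : Measure Ω} {F : Filtration ℕ mΩ}
  {S : ℕ → Ω → ℝ} {t : ℝ}

theorem selfNormalizedExp_pos (n : ℕ) (ω : Ω) : 0 < selfNormalizedExp S t n ω := Real.exp_pos _

theorem selfNormalizedExp_zero (h0 : S 0 = 0) : selfNormalizedExp S t 0 = 1 := by
  funext ω; simp [selfNormalizedExp, h0]

theorem selfNormalizedExp_succ (n : ℕ) (ω : Ω) :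
    selfNormalizedExp S t (n + 1) ω = selfNormalizedExp S t n ω *
      Real.exp (t * (S (n + 1) ω - S n ω) - t ^ 2 * (S (n + 1) ω - S n ω) ^ 2 / 2) := by
  rw [selfNormalizedExp, selfNormalizedExp, ← Real.exp_add, sum_range_succ]
  ring_nf

theorem selfNormalizedExp_le (h0 : S 0 = 0) (n : ℕ) (ω : Ω) :
    selfNormalizedExp S t n ω ≤ Real.exp (n / 2) := by
  induction n with
  | zero => simp [selfNormalizedExp_zero h0]
  | succ n ih =>
    rw [selfNormalizedExp_succ, Nat.cast_succ, add_div, Real.exp_add]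
    exact mul_le_mul ih
      (Real.exp_le_exp.2 (by nlinarith [sq_nonneg (t * (S (n + 1) ω - S n ω) - 1)]))
      (Real.exp_pos _).le (Real.exp_pos _).le

theorem stronglyMeasurable_selfNormalizedExp (hS : StronglyAdapted F S) (n : ℕ) :
    StronglyMeasurable[F n] (selfNormalizedExp S t n) := by
  have hSn : ∀ i ≤ n, Measurable[F n] (S i) := fun i hi => ((hS i).mono (F.mono hi)).measurable
  refine Measurable.stronglyMeasurable (((hSn n le_rfl).const_mul t).sub
    ((Finset.measurable_sum _ fun i hi => ?_).const_mul _)).exp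
  have hi : i + 1 ≤ n := mem_range.1 hi
  exact ((hSn (i + 1) hi).sub (hSn i (by omega))).pow_const 2

theorem integrable_selfNormalizedExp [IsFiniteMeasure μ] (hS : StronglyAdapted F S)
    (h0 : S 0 = 0) (n : ℕ) : Integrable (selfNormalizedExp S t n) μ :=
  .of_bound ((stronglyMeasurable_selfNormalizedExp hS n).mono (F.le n)).aestronglyMeasurable _
    (.of_forall fun ω => by
      rw [Real.norm_eq_abs, abs_of_pos (selfNormalizedExp_pos n ω)]
      exact selfNormalizedExp_le h0 n ω)

theorem integral_selfNormalizedExp_le_one [IsProbabilityMeasure μ] (hS : StronglyAdapted F S)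
    (h0 : S 0 = 0)
    (hheavy : ∀ n, ∀ a > 0, ∀ᵐ ω ∂μ, μ[fun ω => truncation a (S (n + 1) ω - S n ω) | F n] ω ≤ 0)
    (ht : 0 < t) (n : ℕ) : ∫ ω, selfNormalizedExp S t n ω ∂μ ≤ 1 := by
  induction n with
  | zero => simp [selfNormalizedExp_zero h0]
  | succ n ih =>
    have hSm : ∀ i, Measurable (S i) := fun i => ((hS i).mono (F.le i)).measurable
    simp_rw [selfNormalizedExp_succ]
    exact (integral_mul_exp_le_integral (F.le n) (stronglyMeasurable_selfNormalizedExp hS n)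
      (fun ω => (selfNormalizedExp_pos n ω).le) (selfNormalizedExp_le h0 n) ((hSm _).sub (hSm _))
      (hheavy n) ht).trans ih

end SelfNormalizedExp

theorem bercu_touati_heavy_on_left_general
    {Ω : Type*} {m : MeasurableSpace Ω} {μ : Measure Ω} [IsProbabilityMeasure μ]
    (F : Filtration ℕ m) (S : ℕ → Ω → ℝ)
    (hmart : Martingale S F μ)
    (h0 : S 0 = 0)
    (hheavy : ∀ n, ∀ a > (0 : ℝ),
      ∀ᵐ ω ∂μ,
        (μ[fun ω => min |S (n + 1) ω - S n ω| a * Real.sign (S (n + 1) ω - S n ω)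
            | F n]) ω ≤ 0)
    (n : ℕ) (x y : ℝ) (hx : 0 < x) (hy : 0 < y) :
    μ {ω | x ≤ S n ω ∧ ∑ i ∈ range n, (S (i + 1) ω - S i ω) ^ 2 ≤ y}
      ≤ ENNReal.ofReal (Real.exp (-x ^ 2 / (2 * y))) := by
  have ht : 0 < x / y := div_pos hx hy
  have hsub : {ω | x ≤ S n ω ∧ ∑ i ∈ range n, (S (i + 1) ω - S i ω) ^ 2 ≤ y}
      ⊆ {ω | Real.exp (x ^ 2 / (2 * y)) ≤ selfNormalizedExp S (x / y) n ω} := by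
    rintro ω ⟨hSx, hVy⟩
    have h1 : x / y * x ≤ x / y * S n ω := mul_le_mul_of_nonneg_left hSx ht.le
    have h2 := mul_le_mul_of_nonneg_left hVy (by positivity : 0 ≤ (x / y) ^ 2 / 2)
    have h3 : x / y * x - (x / y) ^ 2 / 2 * y = x ^ 2 / (2 * y) := by field_simp; ring
    exact Real.exp_le_exp.2 (by linarith)
  have hZ := integral_selfNormalizedExp_le_one hmart.stronglyAdapted h0 hheavy ht n
  calc μ {ω | x ≤ S n ω ∧ ∑ i ∈ range n, (S (i + 1) ω - S i ω) ^ 2 ≤ y}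
      ≤ ENNReal.ofReal
          ((∫ ω, selfNormalizedExp S (x / y) n ω ∂μ) / Real.exp (x ^ 2 / (2 * y))) :=
        (measure_mono hsub).trans (meas_ge_le_ofReal_integral_div
          (fun ω => (selfNormalizedExp_pos n ω).le)
          (integrable_selfNormalizedExp hmart.stronglyAdapted h0 n) (Real.exp_pos _))
    _ ≤ ENNReal.ofReal (Real.exp (-x ^ 2 / (2 * y))) := by
        refine ENNReal.ofReal_le_ofReal ?_
        rw [neg_div, Real.exp_neg, ← one_div]
        exact div_le_div_of_nonneg_right hZ (Real.exp_pos _).le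

theorem bercu_touati_heavy_on_left
    {Ω : Type*} {m : MeasurableSpace Ω} {μ : Measure Ω} [IsProbabilityMeasure μ]
    (F : Filtration ℕ m) (S : ℕ → Ω → ℝ)
    (hmart : Martingale S F μ)
    (hL2 : ∀ n, MemLp (S n) 2 μ)
    (h0 : S 0 = 0)
    (hheavy : ∀ n, ∀ a > (0 : ℝ),
      ∀ᵐ ω ∂μ,
        (μ[fun ω => min |S (n + 1) ω - S n ω| a * Real.sign (S (n + 1) ω - S n ω)
            | F n]) ω ≤ 0)
    (n : ℕ) (x y : ℝ) (hx : 0 < x) (hy : 0 < y) :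
    μ {ω | x ≤ S n ω ∧ ∑ i ∈ range n, (S (i + 1) ω - S i ω) ^ 2 ≤ y}
      ≤ ENNReal.ofReal (Real.exp (-x ^ 2 / (2 * y))) :=
  bercu_touati_heavy_on_left_general F S hmart h0 hheavy n x y hx hy
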